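/- arXiv:2511.12465 — 2 statements merged into one kernel-verified Lean document; each statement's English description precedes it below -/
import Mathlib

section
/- Let γ ∈ SL(2,ℝ) be elliptic with fixed point z₀ ∈ ℍ, such that γ generates a cyclic group of order 2m (m ≥ 1) and γ ≠ ±I. Then for any z ∈ ℍ with d(z, z₀) > δ > 0, one has cosh d(z, γz) > 1 + (δ/m)². -/
/-!
Conjugating by an element of `SL(2, ℝ)` that moves `I` to `z₀`, we may assume that `γ` fixes
`I`, so that `γ = !![a, -c; c, a]` with `a ^ 2 + c ^ 2 = 1`: a rotation about `I` whose angle `θ`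
satisfies `c = sin (θ / 2)`. A direct computation in the upper half-plane gives
`cosh d(z, γ z) = 1 + 2 c² sinh² d(z, I)`. Since `γ` has order dividing `2m` and `γ ≠ ±1`, the
number `ω = (a + c i)²` is an `m`-th root of unity different from `1`, and `|ω - 1| = 2 |c|`.
Writing `m = ∑_{j < m} (1 - ω ^ j)` and using `|1 - ω ^ j| ≤ j |1 - ω|` gives `|ω - 1| ≥ 2 / m`,
i.e. `|c| ≥ 1 / m`; together with `sinh r > r > δ` this yields the bound.
-/

open UpperHalfPlane

local notation "SL2R" => Matrix.SpecialLinearGroup (Fin 2) ℝ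

theorem norm_pow_sub_one_le {𝕜 : Type*} [NormedDivisionRing 𝕜] {ω : 𝕜} (hω : ‖ω‖ ≤ 1) (j : ℕ) :
    ‖ω ^ j - 1‖ ≤ j * ‖ω - 1‖ := by
  induction j with
  | zero => simp
  | succ j ih =>
    calc ‖ω ^ (j + 1) - 1‖ = ‖ω ^ j * (ω - 1) + (ω ^ j - 1)‖ := by rw [pow_succ]; noncomm_ring
      _ ≤ ‖ω‖ ^ j * ‖ω - 1‖ + ‖ω ^ j - 1‖ := by grw [norm_add_le, norm_mul, norm_pow]
      _ ≤ (j + 1 : ℕ) * ‖ω - 1‖ := by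
        grw [pow_le_one₀ (norm_nonneg ω) hω, ih]; push_cast; linarith

namespace Complex

open Finset in
theorem two_div_le_norm_sub_one_of_pow_eq_one {ω : ℂ} {m : ℕ} (hω : ω ^ m = 1) (hω1 : ω ≠ 1) :
    2 / m ≤ ‖ω - 1‖ := by
  rcases Nat.eq_zero_or_pos m with rfl | hm
  · simp
  have hnorm : ‖ω‖ = 1 := norm_eq_one_of_pow_eq_one hω hm.ne'
  have hsum : ∑ j ∈ range m, (ω ^ j - 1) = -m := by
    rw [sum_sub_distrib, geom_sum_eq hω1, hω]; simp
  have htri : ∑ j ∈ range m, (j : ℝ) = m * (m - 1) / 2 := by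
    have := congrArg (Nat.cast : ℕ → ℝ) (sum_range_id_mul_two m)
    push_cast [Nat.cast_pred hm] at this
    linarith
  have hm_le : (m : ℝ) ≤ m * (m - 1) / 2 * ‖ω - 1‖ := by
    calc (m : ℝ) = ‖∑ j ∈ range m, (ω ^ j - 1)‖ := by simp [hsum]
      _ ≤ ∑ j ∈ range m, (j : ℝ) * ‖ω - 1‖ :=
        (norm_sum_le _ _).trans (sum_le_sum fun j _ ↦ norm_pow_sub_one_le hnorm.le j)
      _ = m * (m - 1) / 2 * ‖ω - 1‖ := by rw [← sum_mul, htri]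
  have hmR : (0 : ℝ) < m := by exact_mod_cast hm
  rw [div_le_iff₀ hmR]
  nlinarith [norm_nonneg (ω - 1)]

open ComplexConjugate in
theorem norm_sq_sub_one_of_norm_eq_one {ζ : ℂ} (hζ : ‖ζ‖ = 1) :
    ‖ζ ^ 2 - 1‖ = 2 * |ζ.im| := by
  have h : ζ ^ 2 - 1 = ζ * (ζ - conj ζ) := by
    rw [mul_sub, mul_conj, normSq_eq_norm_sq, hζ]; push_cast; ring
  rw [h, norm_mul, hζ, one_mul, sub_conj, norm_mul, norm_I, mul_one, norm_real,
    Real.norm_eq_abs, abs_mul, abs_two]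

theorem im_ne_zero_of_norm_eq_one {ζ : ℂ} (hζ : ‖ζ‖ = 1) (h1 : ζ ≠ 1) (h2 : ζ ≠ -1) :
    ζ.im ≠ 0 := by
  intro h
  have := norm_sq_sub_one_of_norm_eq_one hζ
  rw [h, abs_zero, mul_zero, norm_eq_zero, sub_eq_zero] at this
  exact sq_ne_one_iff.2 ⟨h1, h2⟩ this

theorem inv_le_abs_im_of_pow_eq_one {ζ : ℂ} (hζ : ‖ζ‖ = 1) {m : ℕ} (h : ζ ^ (2 * m) = 1)
    (h1 : ζ ≠ 1) (h2 : ζ ≠ -1) : (m : ℝ)⁻¹ ≤ |ζ.im| := by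
  have hω := two_div_le_norm_sub_one_of_pow_eq_one (ω := ζ ^ 2) (by rw [← pow_mul, h])
    (sq_ne_one_iff.2 ⟨h1, h2⟩)
  rw [norm_sq_sub_one_of_norm_eq_one hζ, div_eq_mul_inv] at hω
  linarith

end Complex

theorem sl_smul_I_eq_I_iff (k : SL2R) : k • I = I ↔ k 0 0 = k 1 1 ∧ k 0 1 = -k 1 0 := by
  rw [MulAction.compHom_smul_def, gl_smul_I_eq_I_iff_of_pos (by simp)]
  simp

/-- On the stabilizer of `I`, whose elements are `!![a, -c; c, a]`, the map `k ↦ a + c i` is an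
isomorphism onto the unit circle; `k` acts on `ℍ` as the rotation about `I` by twice the argument
of `a + c i`. -/
def rotationFactor (k : SL2R) : ℂ := ⟨k 0 0, k 1 0⟩

@[simp] theorem rotationFactor_im (k : SL2R) : (rotationFactor k).im = k 1 0 := rfl

@[simp] theorem rotationFactor_one : rotationFactor 1 = 1 := by
  apply Complex.ext <;> simp [rotationFactor]

@[simp] theorem rotationFactor_neg_one : rotationFactor (-1) = -1 := by
  apply Complex.ext <;> simp [rotationFactor]

theorem rotationFactor_mul {k : SL2R} (hk : k • I = I) (k' : SL2R) :
    rotationFactor (k * k') = rotationFactor k * rotationFactor k' := by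
  obtain ⟨h11, h01⟩ := (sl_smul_I_eq_I_iff k).1 hk
  apply Complex.ext <;> simp [rotationFactor, Matrix.mul_apply, Fin.sum_univ_two, h11, h01] <;> ring

theorem rotationFactor_pow {k : SL2R} (hk : k • I = I) (n : ℕ) :
    rotationFactor (k ^ n) = rotationFactor k ^ n := by
  induction n with
  | zero => simp
  | succ n ih => rw [pow_succ', rotationFactor_mul hk, ih, pow_succ']

theorem norm_rotationFactor {k : SL2R} (hk : k • I = I) : ‖rotationFactor k‖ = 1 := by
  obtain ⟨h11, h01⟩ := (sl_smul_I_eq_I_iff k).1 hk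
  have hdet := k.det_coe
  rw [Matrix.det_fin_two, ← h11, h01] at hdet
  rw [Complex.norm_def, Complex.normSq_apply, Real.sqrt_eq_one]
  simp only [rotationFactor]
  linarith

theorem rotationFactor_injOn : Set.InjOn rotationFactor {k : SL2R | k • I = I} := by
  intro k hk k' hk' h
  obtain ⟨h11, h01⟩ := (sl_smul_I_eq_I_iff k).1 hk
  obtain ⟨h11', h01'⟩ := (sl_smul_I_eq_I_iff k').1 hk'
  have h00 : k 0 0 = k' 0 0 := congrArg Complex.re h
  have h10 : k 1 0 = k' 1 0 := congrArg Complex.im h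
  ext i j
  fin_cases i <;> fin_cases j <;> simp [h00, h10, h01, h01', ← h11, ← h11']

theorem inv_le_abs_apply_one_zero_of_pow_eq_one {k : SL2R} (hk : k • I = I) (hk1 : k ≠ 1)
    (hk2 : k ≠ -1) {m : ℕ} (hkm : k ^ (2 * m) = 1) : (m : ℝ)⁻¹ ≤ |k 1 0| ∧ k 1 0 ≠ 0 := by
  have hζ1 : rotationFactor k ≠ 1 := fun h ↦
    hk1 (rotationFactor_injOn hk (one_smul _ _) (h.trans rotationFactor_one.symm))
  have hζ2 : rotationFactor k ≠ -1 := fun h ↦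
    hk2 (rotationFactor_injOn hk (by simp [sl_smul_I_eq_I_iff])
      (h.trans rotationFactor_neg_one.symm))
  have hpow : rotationFactor k ^ (2 * m) = 1 := by
    rw [← rotationFactor_pow hk, hkm, rotationFactor_one]
  exact ⟨Complex.inv_le_abs_im_of_pow_eq_one (norm_rotationFactor hk) hpow hζ1 hζ2,
    Complex.im_ne_zero_of_norm_eq_one (norm_rotationFactor hk) hζ1 hζ2⟩

open ComplexConjugate in
theorem UpperHalfPlane.sinh_dist (z w : ℍ) :
    Real.sinh (dist z w) = dist (z : ℂ) w * dist (z : ℂ) (conj (w : ℂ)) / (2 * z.im * w.im) := by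
  have hzw : 0 < z.im * w.im := mul_pos z.im_pos w.im_pos
  rw [show dist z w = 2 * (dist z w / 2) by ring, Real.sinh_two_mul, sinh_half_dist,
    cosh_half_dist]
  field_simp
  rw [Real.sq_sqrt hzw.le]
  ring

theorem UpperHalfPlane.sinh_dist_I (w : ℍ) :
    Real.sinh (dist w I) = ‖(w : ℂ) ^ 2 + 1‖ / (2 * w.im) := by
  rw [sinh_dist, Complex.dist_eq, Complex.dist_eq, ← norm_mul]
  simp only [coe_I, Complex.conj_I, sub_neg_eq_add, I_im]
  congr 1
  · congr 1; ring_nf; simp [add_comm]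
  · ring

theorem cosh_dist_smul_of_smul_I_eq_I {k : SL2R} (hk : k • I = I) (w : ℍ) :
    Real.cosh (dist w (k • w)) = 1 + 2 * k 1 0 ^ 2 * Real.sinh (dist w I) ^ 2 := by
  obtain ⟨h11, h01⟩ := (sl_smul_I_eq_I_iff k).1 hk
  set D : ℂ := k 1 0 * w + k 0 0
  have hD : D ≠ 0 := by
    have := denom_ne_zero (Matrix.SpecialLinearGroup.mapGL ℝ k) w
    simp only [denom] at this
    simpa [h11, D] using this
  have hkw : (k • w : ℍ) - (w : ℂ) = -(k 1 0 * ((w : ℂ) ^ 2 + 1) / D) := by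
    rw [coe_specialLinearGroup_apply, ← h11, h01]
    simp only [Algebra.algebraMap_self, RingHom.id_apply]
    rw [div_sub' hD, ← neg_div]
    congr 1
    push_cast
    ring
  have him : (k • w).im = w.im / ‖D‖ ^ 2 := by
    rw [MulAction.compHom_smul_def, im_smul_eq_div_normSq]
    simp [denom, h11, Complex.sq_norm, D]
  have hw := w.im_pos
  have hD' : ‖D‖ ≠ 0 := norm_ne_zero_iff.mpr hD
  rw [cosh_dist, him, sinh_dist_I, Complex.dist_eq, ← norm_neg, neg_sub, hkw]
  simp only [norm_neg, norm_div, norm_mul, Complex.norm_real, Real.norm_eq_abs]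
  field_simp
  rw [sq_abs]
  ring

theorem cosh_dist_elliptic_lower_bound_general
    (γ : SL2R) (hγ1 : γ ≠ 1) (hγ2 : γ ≠ -1)
    (z₀ : ℍ) (hz₀ : γ • z₀ = z₀)
    (m : ℕ) (horder : orderOf γ = 2 * m)
    (δ : ℝ) (hδ : 0 < δ) :
    ∀ z : ℍ, δ < dist z z₀ →
      1 + (δ / m) ^ 2 < Real.cosh (dist z (γ • z)) := by
  intro z hz
  set g := z₀.toSL2R
  set k := MulAut.conj g⁻¹ γ
  have hkI : k • I = I := by simp [k, mul_smul, g, hz₀, inv_smul_eq_iff]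
  have hk1 : k ≠ 1 := (map_ne_one_iff _ (MulAut.conj g⁻¹).injective).2 hγ1
  have hk2 : k ≠ -1 := fun h ↦ hγ2 ((MulAut.conj g⁻¹).injective (h.trans (by simp)))
  have hkm : k ^ (2 * m) = 1 := by rw [← map_pow, ← horder, pow_orderOf_eq_one, map_one]
  obtain ⟨hc, hc0⟩ := inv_le_abs_apply_one_zero_of_pow_eq_one hkI hk1 hk2 hkm
  have hd : dist z (γ • z) = dist (g⁻¹ • z) (k • g⁻¹ • z) := by
    rw [← dist_smul g⁻¹ z (γ • z)]; simp [k, mul_smul]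
  have hd₀ : dist z z₀ = dist (g⁻¹ • z) I := by
    rw [← dist_smul g⁻¹ z z₀, inv_smul_eq_iff.2 (toSL2R_smul_I z₀).symm]
  have hs : δ < Real.sinh (dist z z₀) := hz.trans (Real.self_lt_sinh_iff.2 (hδ.trans hz))
  rw [hd, cosh_dist_smul_of_smul_I_eq_I hkI, ← hd₀]
  calc 1 + (δ / m) ^ 2 = 1 + (δ * (m : ℝ)⁻¹) ^ 2 := by rw [div_eq_mul_inv]
    _ ≤ 1 + (δ * |k 1 0|) ^ 2 := by gcongr
    _ < 1 + (Real.sinh (dist z z₀) * |k 1 0|) ^ 2 := by gcongr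
    _ ≤ 1 + 2 * k 1 0 ^ 2 * Real.sinh (dist z z₀) ^ 2 := by
      rw [mul_pow, sq_abs]; nlinarith [sq_nonneg (Real.sinh (dist z z₀) * k 1 0)]

theorem cosh_dist_elliptic_lower_bound
    (γ : SL2R) (hγ1 : γ ≠ 1) (hγ2 : γ ≠ -1)
    (htr : |Matrix.trace (γ : Matrix (Fin 2) (Fin 2) ℝ)| < 2)
    (z₀ : ℍ) (hz₀ : γ • z₀ = z₀)
    (m : ℕ) (hm : 1 ≤ m) (horder : orderOf γ = 2 * m)
    (δ : ℝ) (hδ : 0 < δ) :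
    ∀ z : ℍ, δ < dist z z₀ →
      1 + (δ / m) ^ 2 < Real.cosh (dist z (γ • z)) :=
  cosh_dist_elliptic_lower_bound_general γ hγ1 hγ2 z₀ hz₀ m horder δ hδ
end

section
/- Fix δ ∈ (0,1) and Y larger than the order of every stabilizer subgroup of an elliptic point of SL(2,ℤ). Let F_δ be the set of z ∈ ℍ with |Re z| ≤ 1/2, Y^{-1} < Im z, and d(z, e) > δ for every elliptic point e of SL(2,ℤ). Then for every γ ∈ SL(2,ℤ) \ {±I} and every z ∈ F_δ with Im z < 2, the hyperbolic distance satisfies d(z, γz) > δ/(4Y). -/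
open UpperHalfPlane

local notation "SL2Z" => Matrix.SpecialLinearGroup (Fin 2) ℤ

/-- An elliptic point of `SL(2,ℤ)`: a point of ℍ fixed by some `γ ≠ ±I`. -/
def IsEllipticPoint (e : ℍ) : Prop :=
  ∃ γ : SL2Z, γ ≠ 1 ∧ γ ≠ -1 ∧ γ • e = e

/-!
For `g ∈ SL(2, ℝ)` one has `sinh (d(z, g z) / 2) = |Q_g(z)| / (2 Im z)`, where
`Q_g(z) = c z² + (d - a) z - b` is the fixed-point polynomial of `g`.

If `|tr γ| ≥ 2`, a sum-of-squares identity gives `|Q_γ(z)| ≥ |c| (Im z)²`, while for `c = 0`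
integrality forces `Q_γ = -b` with `b ≠ 0`; since `Y⁻¹ < Im z < 2 < Y` this gives
`d(z, γ z) > 1/(2Y)`. If `|tr γ| < 2`, then `γ` fixes some `e ∈ ℍ`,
`Q_γ(z) = c (z - e)(z - ē)`, hence `sinh (d(z, γ z) / 2) = |c| Im e · sinh d(z, e)`, and
`4 c² (Im e)² = 4 - tr² γ ≥ 3` gives `d(z, γ z) ≥ d(z, e) > δ`. Finally `Y > 2` because the
stabilizer of `i` is finite and contains `±1`.
-/

open scoped MatrixGroups ComplexConjugate
open Polynomial Real

theorem Real.sinh_le_two_mul {x : ℝ} (hx : 0 ≤ x) (hx1 : x ≤ 1) : sinh x ≤ 2 * x := by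
  have hx' : |x| ≤ 1 := by rwa [abs_of_nonneg hx]
  have h₁ := (abs_le.mp (abs_exp_sub_one_le hx')).2
  have h₂ := (abs_le.mp (abs_exp_sub_one_le (x := -x) (by rwa [abs_neg]))).1
  rw [abs_neg, abs_of_nonneg hx] at h₂
  rw [abs_of_nonneg hx] at h₁
  rw [sinh_eq]
  linarith

theorem lt_of_lt_sinh_half {x r : ℝ} (hx : 0 ≤ x) (hx2 : x ≤ 2) (h : x < sinh (r / 2)) :
    x < r := by
  have : sinh (x / 2) < sinh (r / 2) :=
    (sinh_le_two_mul (by positivity) (by linarith)).trans_lt (by linarith)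
  linarith [sinh_lt_sinh.mp this]

namespace Complex

variable {p q r : ℝ} {e : ℂ}

theorem vieta_of_root (he : e.im ≠ 0) (hroot : (p : ℂ) * e ^ 2 + q * e + r = 0) :
    (p : ℂ) * (e + conj e) = -q ∧ (p : ℂ) * (e * conj e) = r := by
  have hconj : (p : ℂ) * conj e ^ 2 + q * conj e + r = 0 := by
    simpa using congrArg conj hroot
  have hne : e - conj e ≠ 0 := by
    rw [sub_conj]
    exact mul_ne_zero (by exact_mod_cast mul_ne_zero two_ne_zero he) I_ne_zero
  have hsum : (p : ℂ) * (e + conj e) = -q := by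
    have : (e - conj e) * (p * (e + conj e) + q) = 0 := by linear_combination hroot - hconj
    linear_combination (mul_eq_zero.mp this).resolve_left hne
  exact ⟨hsum, by linear_combination -hroot + e * hsum⟩

theorem quadratic_eq_mul_sub_mul_sub_conj (he : e.im ≠ 0)
    (hroot : (p : ℂ) * e ^ 2 + q * e + r = 0) (z : ℂ) :
    (p : ℂ) * z ^ 2 + q * z + r = p * (z - e) * (z - conj e) := by
  obtain ⟨hsum, hprod⟩ := vieta_of_root he hroot
  linear_combination z * hsum - hprod

theorem four_mul_sq_mul_im_sq_of_root (he : e.im ≠ 0)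
    (hroot : (p : ℂ) * e ^ 2 + q * e + r = 0) :
    4 * p ^ 2 * e.im ^ 2 = 4 * p * r - q ^ 2 := by
  obtain ⟨hsum, hprod⟩ := vieta_of_root he hroot
  have hdiff : ((2 * e.im : ℝ) : ℂ) * I = e - conj e := (sub_conj e).symm
  have : ((4 * p ^ 2 * e.im ^ 2 : ℝ) : ℂ) = ((4 * p * r - q ^ 2 : ℝ) : ℂ) := by
    push_cast at hdiff ⊢
    linear_combination 4 * (p : ℂ) ^ 2 * e.im ^ 2 * I_sq
      - (p : ℂ) ^ 2 * (2 * e.im * I + e - conj e) * hdiff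
      - (p * (e + conj e) - q) * hsum + 4 * p * hprod
  exact_mod_cast this

end Complex

namespace UpperHalfPlane

-- Real coefficients cast to `ℂ`: the shape the lemmas on quadratics above expect.
theorem aeval_fixpointPolynomial (g : GL (Fin 2) ℝ) (z : ℂ) :
    aeval z g.fixpointPolynomial =
      ((g 1 0 : ℝ) : ℂ) * z ^ 2 + ((g 1 1 - g 0 0 : ℝ) : ℂ) * z + ((-g 0 1 : ℝ) : ℂ) := by
  simp [Matrix.GeneralLinearGroup.fixpointPolynomial, sub_eq_add_neg]

variable {g : GL (Fin 2) ℝ}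

theorem sinh_half_dist_smul (hg : g.val.det = 1) (z : ℍ) :
    sinh (dist z (g • z) / 2) = ‖aeval (z : ℂ) g.fixpointPolynomial‖ / (2 * z.im) := by
  have hj := denom_ne_zero g z
  rw [← Matrix.GeneralLinearGroup.val_det_apply] at hg
  have hdist : dist (z : ℂ) ((g • z : ℍ) : ℂ)
      = ‖aeval (z : ℂ) g.fixpointPolynomial‖ / ‖denom g z‖ := by
    rw [dist_eq_norm, coe_smul_of_det_pos (by rw [hg]; exact one_pos), ← norm_div,
      aeval_fixpointPolynomial]
    congr 1
    field_simp
    simp only [num, denom]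
    push_cast
    ring
  have him : √(z.im * (g • z).im) = z.im / ‖denom g z‖ := by
    rw [im_smul_eq_div_normSq, hg, abs_one, one_mul, Complex.normSq_eq_norm_sq]
    rw [show z.im * (z.im / ‖denom g z‖ ^ 2) = (z.im / ‖denom g z‖) ^ 2 by ring]
    exact sqrt_sq (by positivity)
  rw [sinh_half_dist, hdist, him]
  have := norm_pos_iff.mpr hj
  have := z.im_pos
  field_simp

theorem smul_eq_self_iff_aeval_fixpointPolynomial_eq_zero (hg : 0 < g.val.det) {z : ℍ} :
    g • z = z ↔ aeval (z : ℂ) g.fixpointPolynomial = 0 := by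
  rw [gl_smul_eq_self_iff_quadratic hg, aeval_fixpointPolynomial]
  push_cast
  ring_nf

variable {e : ℍ}

theorem aeval_fixpointPolynomial_eq_mul (hg : 0 < g.val.det) (he : g • e = e) (z : ℂ) :
    aeval z g.fixpointPolynomial = g 1 0 * (z - e) * (z - conj (e : ℂ)) := by
  have hroot := (smul_eq_self_iff_aeval_fixpointPolynomial_eq_zero hg).mp he
  rw [aeval_fixpointPolynomial] at hroot ⊢
  exact Complex.quadratic_eq_mul_sub_mul_sub_conj e.im_ne_zero hroot z

theorem four_mul_sq_mul_im_sq_of_smul_eq_self (hg : g.val.det = 1) (he : g • e = e) :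
    4 * g 1 0 ^ 2 * e.im ^ 2 = 4 - g.val.trace ^ 2 := by
  have hroot := (smul_eq_self_iff_aeval_fixpointPolynomial_eq_zero (hg ▸ one_pos)).mp he
  rw [aeval_fixpointPolynomial] at hroot
  have key := Complex.four_mul_sq_mul_im_sq_of_root e.im_ne_zero hroot
  rw [coe_im] at key
  rw [key, Matrix.trace_fin_two]
  rw [Matrix.det_fin_two] at hg
  linear_combination 4 * hg

theorem sinh_half_dist_smul_of_smul_eq_self (hg : g.val.det = 1) (he : g • e = e) (z : ℍ) :
    sinh (dist z (g • z) / 2) = |g 1 0| * e.im * sinh (dist z e) := by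
  have hsinh := sinh_half_dist z e
  have hcosh := cosh_half_dist z e
  have hsqrt : √(z.im * e.im) ^ 2 = z.im * e.im := sq_sqrt (by positivity)
  have := z.im_pos
  have := e.im_pos
  rw [sinh_half_dist_smul hg, aeval_fixpointPolynomial_eq_mul (hg ▸ one_pos) he, norm_mul,
    norm_mul, Complex.norm_real, Real.norm_eq_abs, ← Complex.dist_eq, ← Complex.dist_eq,
    show dist z e = 2 * (dist z e / 2) by ring, sinh_two_mul, hsinh, hcosh]
  field_simp
  rw [hsqrt]
  ring

theorem sq_mul_im_pow_four_le_norm_sq (hg : g.val.det = 1) (ht : 4 ≤ g.val.trace ^ 2) (z : ℂ) :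
    g 1 0 ^ 2 * z.im ^ 4 ≤ ‖aeval z g.fixpointPolynomial‖ ^ 2 := by
  rw [Matrix.det_fin_two] at hg
  rw [Matrix.trace_fin_two] at ht
  set a := g 0 0
  set b := g 0 1
  set c := g 1 0
  set d := g 1 1
  set X := 2 * c * z.re + d - a
  have hnorm : ‖aeval z g.fixpointPolynomial‖ ^ 2
      = (c * (z.re ^ 2 - z.im ^ 2) + (d - a) * z.re - b) ^ 2 + (z.im * X) ^ 2 := by
    rw [← Complex.normSq_eq_norm_sq, Complex.normSq_apply, aeval_fixpointPolynomial]
    simp only [Complex.add_re, Complex.add_im, Complex.mul_re, Complex.mul_im, pow_two,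
      Complex.ofReal_re, Complex.ofReal_im]
    ring
  have hsos : 16 * c ^ 2 * (‖aeval z g.fixpointPolynomial‖ ^ 2 - c ^ 2 * z.im ^ 4)
      = (X ^ 2 - ((a + d) ^ 2 - 4)) ^ 2 + 8 * c ^ 2 * z.im ^ 2 * (X ^ 2 + ((a + d) ^ 2 - 4)) := by
    rw [hnorm]
    linear_combination (32 * c * (c * (z.re ^ 2 - z.im ^ 2) + (d - a) * z.re)
      - 16 * a * d - 16 * b * c + 16) * hg
  have hnonneg :
      0 ≤ 16 * c ^ 2 * (‖aeval z g.fixpointPolynomial‖ ^ 2 - c ^ 2 * z.im ^ 4) := by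
    rw [hsos]
    have : 0 ≤ X ^ 2 + ((a + d) ^ 2 - 4) := by linarith [sq_nonneg X]
    positivity
  rcases eq_or_ne c 0 with hc | hc
  · rw [hc, zero_pow two_ne_zero, zero_mul]; positivity
  · exact sub_nonneg.mp (nonneg_of_mul_nonneg_right hnonneg (by positivity))

end UpperHalfPlane

namespace ModularGroup

variable (γ : SL(2, ℤ))

theorem trace_coe_GL :
    (γ : GL (Fin 2) ℝ).val.trace = ((γ : Matrix (Fin 2) (Fin 2) ℤ).trace : ℝ) := by
  simp [Matrix.trace_fin_two]

theorem det_coe_GL : (γ : GL (Fin 2) ℝ).val.det = 1 := by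
  rw [← Matrix.GeneralLinearGroup.val_det_apply]; simp

theorem exists_smul_eq_self_of_sq_trace_lt_four
    (ht : (γ : Matrix (Fin 2) (Fin 2) ℤ).trace ^ 2 < 4) : ∃ e : ℍ, γ • e = e := by
  have hell : (γ : GL (Fin 2) ℝ).IsElliptic := by
    rw [Matrix.GeneralLinearGroup.IsElliptic, Matrix.IsElliptic, Matrix.discr_fin_two,
      det_coe_GL, trace_coe_GL]
    have : (((γ : Matrix (Fin 2) (Fin 2) ℤ).trace ^ 2 : ℤ) : ℝ) < 4 := by exact_mod_cast ht
    push_cast at this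
    linarith
  exact ⟨_, (gl_smul_eq_self_iff_eq_fixedPt (by rw [det_coe_GL]; exact one_pos) hell).mpr rfl⟩

theorem dist_le_dist_smul_of_smul_eq_self (ht : (γ : Matrix (Fin 2) (Fin 2) ℤ).trace ^ 2 < 4)
    {e : ℍ} (he : γ • e = e) (z : ℍ) : dist z e ≤ dist z (γ • z) := by
  have ht1 : ((γ : Matrix (Fin 2) (Fin 2) ℤ).trace : ℝ) ^ 2 ≤ 1 := by
    set t := (γ : Matrix (Fin 2) (Fin 2) ℤ).trace
    have : -1 ≤ t := by by_contra h; nlinarith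
    have : t ≤ 1 := by by_contra h; nlinarith
    exact_mod_cast (show t ^ 2 ≤ 1 by nlinarith)
  have hce := four_mul_sq_mul_im_sq_of_smul_eq_self (det_coe_GL γ) he
  rw [trace_coe_GL] at hce
  have hce' : 1 / 2 ≤ |(γ : GL (Fin 2) ℝ) 1 0| * e.im := by
    have hsq : 3 / 4 ≤ (|(γ : GL (Fin 2) ℝ) 1 0| * e.im) ^ 2 := by
      rw [mul_pow, sq_abs]; linarith
    nlinarith [mul_nonneg (abs_nonneg ((γ : GL (Fin 2) ℝ) 1 0)) e.im_pos.le]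
  have hr := dist_nonneg (x := z) (y := e)
  have : sinh (dist z e / 2) ≤ sinh (dist z (γ • z) / 2) := by
    calc sinh (dist z e / 2) ≤ sinh (dist z e / 2) * cosh (dist z e / 2) :=
          le_mul_of_one_le_right (sinh_nonneg_iff.mpr (by positivity)) (one_le_cosh _)
      _ = 1 / 2 * sinh (2 * (dist z e / 2)) := by rw [sinh_two_mul]; ring
      _ = 1 / 2 * sinh (dist z e) := by rw [mul_div_cancel₀ _ two_ne_zero]
      _ ≤ |(γ : GL (Fin 2) ℝ) 1 0| * e.im * sinh (dist z e) :=
          mul_le_mul_of_nonneg_right hce' (sinh_nonneg_iff.mpr hr)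
      _ = sinh (dist z (γ • z) / 2) :=
          (sinh_half_dist_smul_of_smul_eq_self (det_coe_GL γ) he z).symm
  linarith [sinh_le_sinh.mp this]

theorem one_le_norm_aeval_fixpointPolynomial_of_lower_left_eq_zero (h1 : γ ≠ 1) (h2 : γ ≠ -1)
    (hc : γ 1 0 = 0) (z : ℂ) : 1 ≤ ‖aeval z (γ : GL (Fin 2) ℝ).fixpointPolynomial‖ := by
  have had : γ 0 0 * γ 1 1 = 1 := by
    have := γ.det_coe
    rwa [Matrix.det_fin_two, hc, mul_zero, sub_zero] at this
  have hb : γ 0 1 ≠ 0 := by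
    intro hb
    rcases Int.eq_one_or_neg_one_of_mul_eq_one' had with ⟨ha, hd⟩ | ⟨ha, hd⟩
    · exact h1 (by ext i j; fin_cases i <;> fin_cases j <;> simp [ha, hb, hc, hd])
    · exact h2 (by ext i j; fin_cases i <;> fin_cases j <;> simp [ha, hb, hc, hd])
  have hda : γ 1 1 = γ 0 0 := by
    rcases Int.eq_one_or_neg_one_of_mul_eq_one' had with ⟨ha, hd⟩ | ⟨ha, hd⟩ <;> rw [ha, hd]
  have : ‖aeval z (γ : GL (Fin 2) ℝ).fixpointPolynomial‖ = |(γ 0 1 : ℝ)| := by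
    rw [aeval_fixpointPolynomial]
    simp [hc, hda]
  rw [this]
  exact_mod_cast Int.one_le_abs hb

theorem min_one_sq_im_le_norm_aeval_fixpointPolynomial (h1 : γ ≠ 1) (h2 : γ ≠ -1)
    (ht : 4 ≤ (γ : Matrix (Fin 2) (Fin 2) ℤ).trace ^ 2) (z : ℂ) :
    min 1 (z.im ^ 2) ≤ ‖aeval z (γ : GL (Fin 2) ℝ).fixpointPolynomial‖ := by
  rcases eq_or_ne (γ 1 0) 0 with hc | hc
  · exact (min_le_left _ _).trans
      (one_le_norm_aeval_fixpointPolynomial_of_lower_left_eq_zero γ h1 h2 hc z)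
  · have hc1 : (1 : ℝ) ≤ (γ : GL (Fin 2) ℝ) 1 0 ^ 2 := by
      have : 1 ≤ γ 1 0 ^ 2 := by nlinarith [Int.one_le_abs hc, sq_abs (γ 1 0)]
      simpa using (show ((1 : ℤ) : ℝ) ≤ ((γ 1 0 ^ 2 : ℤ) : ℝ) by exact_mod_cast this)
    have hQ := sq_mul_im_pow_four_le_norm_sq (det_coe_GL γ)
      (by rw [trace_coe_GL]; exact_mod_cast ht) z
    have hsq : (z.im ^ 2) ^ 2 ≤ ‖aeval z (γ : GL (Fin 2) ℝ).fixpointPolynomial‖ ^ 2 := by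
      nlinarith [pow_nonneg (sq_nonneg z.im) 2]
    exact (min_le_right _ _).trans
      ((pow_le_pow_iff_left₀ (sq_nonneg _) (norm_nonneg _) two_ne_zero).mp hsq)

theorem finite_stabilizer (z : ℍ) : {γ : SL(2, ℤ) | γ • z = z}.Finite := by
  have hinj : Function.Injective (fun γ : SL(2, ℤ) ↦ (⟨γ, γ, rfl⟩ : 𝒮ℒ)) := by
    intro γ₁ γ₂ h
    ext i j
    simpa using congrArg (fun g : 𝒮ℒ ↦ (g : GL (Fin 2) ℝ) i j) h
  exact ((ProperlyDiscontinuousSMul.finite_stabilizer' 𝒮ℒ z).preimage hinj.injOn)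

theorem two_le_card_stabilizer (z : ℍ) : 2 ≤ Nat.card {γ : SL(2, ℤ) // γ • z = z} := by
  have hne : (1 : SL(2, ℤ)) ≠ -1 := fun h ↦ by
    simpa using congrArg (fun g : SL(2, ℤ) ↦ g 0 0) h
  change 2 ≤ Nat.card {γ : SL(2, ℤ) | γ • z = z}
  rw [Nat.card_coe_set_eq]
  calc 2 = ({1, -1} : Set SL(2, ℤ)).ncard := (Set.ncard_pair hne).symm
    _ ≤ _ := Set.ncard_le_ncard
      (Set.pair_subset (one_smul _ z) ((SL_neg_smul 1 z).trans (one_smul _ z)))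
      (finite_stabilizer z)

theorem isEllipticPoint_I : IsEllipticPoint I := by
  refine ⟨S, fun h ↦ ?_, fun h ↦ ?_, by rw [modular_S_smul]; ext; simp⟩ <;>
    simpa [coe_S] using congrArg (fun g : SL(2, ℤ) ↦ g 1 0) h

end ModularGroup

open ModularGroup in
theorem dist_lower_bound_bulk_general
    (δ Y : ℝ) (hδ0 : 0 < δ) (hδ1 : δ < 1)
    (hY : ∀ e : ℍ, IsEllipticPoint e →
      (Nat.card {γ : SL2Z // γ • e = e} : ℝ) < Y)
    (z : ℍ) (him : Y⁻¹ < z.im)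
    (hbulk : ∀ e : ℍ, IsEllipticPoint e → δ < dist z e)
    (him2 : z.im < 2) :
    ∀ γ : SL2Z, γ ≠ 1 → γ ≠ -1 → δ / (4 * Y) < dist z (γ • z) := by
  intro γ hγ₁ hγ₂
  have hY2 : 2 < Y := by
    have hcard : (2 : ℝ) ≤ Nat.card {γ : SL2Z // γ • I = I} := by
      exact_mod_cast two_le_card_stabilizer I
    linarith [hY I isEllipticPoint_I]
  have hy := z.im_pos
  rcases lt_or_ge ((γ : Matrix (Fin 2) (Fin 2) ℤ).trace ^ 2) 4 with ht | ht
  · obtain ⟨e, he⟩ := exists_smul_eq_self_of_sq_trace_lt_four γ ht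
    calc δ / (4 * Y) < δ := by rw [div_lt_iff₀ (by positivity)]; nlinarith
      _ < dist z e := hbulk e ⟨γ, hγ₁, hγ₂, he⟩
      _ ≤ dist z (γ • z) := dist_le_dist_smul_of_smul_eq_self γ ht he z
  · have hQ := min_one_sq_im_le_norm_aeval_fixpointPolynomial γ hγ₁ hγ₂ ht z
    rw [coe_im] at hQ
    have hYy : z.im / Y < min 1 (z.im ^ 2) := by
      rw [inv_lt_iff_one_lt_mul₀ (by positivity)] at him
      refine lt_min ?_ ?_ <;> rw [div_lt_iff₀ (by positivity)] <;> nlinarith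
    have hsinh : 1 / (2 * Y) < sinh (dist z (γ • z) / 2) := by
      rw [sl_moeb, sinh_half_dist_smul (det_coe_GL γ),
        div_lt_div_iff₀ (by positivity) (by positivity)]
      rw [div_lt_iff₀ (by positivity)] at hYy
      nlinarith
    have hY' : 1 / (2 * Y) ≤ 2 := by rw [div_le_iff₀ (by positivity)]; nlinarith
    calc δ / (4 * Y) < 1 / (2 * Y) := by
          rw [div_lt_div_iff₀ (by positivity) (by positivity)]; nlinarith
      _ < dist z (γ • z) := lt_of_lt_sinh_half (by positivity) hY' hsinh

theorem dist_lower_bound_bulk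
    (δ Y : ℝ) (hδ0 : 0 < δ) (hδ1 : δ < 1)
    (hY : ∀ e : ℍ, IsEllipticPoint e →
      (Nat.card {γ : SL2Z // γ • e = e} : ℝ) < Y)
    (z : ℍ) (hre : |z.re| ≤ 1 / 2) (him : Y⁻¹ < z.im)
    (hbulk : ∀ e : ℍ, IsEllipticPoint e → δ < dist z e)
    (him2 : z.im < 2) :
    ∀ γ : SL2Z, γ ≠ 1 → γ ≠ -1 → δ / (4 * Y) < dist z (γ • z) :=
  dist_lower_bound_bulk_general δ Y hδ0 hδ1 hY z him hbulk him2
end
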